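/- Let f : ℝ² → ℝ be smooth, let a^f(x,y,p) = f_xx(x,y) + 2f_xy(x,y)p + f_yy(x,y)p², and let I(x,y,p) = (a^f)_x(x,y,p) + p·(a^f)_y(x,y,p). Suppose the origin lies on the criminant of the asymptotic IDE, i.e. a^f(0,0,0) = 0 and (a^f)_p(0,0,0) = 0, and suppose the flec-surface of a^f has vertical tangent plane at the origin, i.e. I(0,0,0) = 0 and ∂I/∂p (0,0,0) = 0. Then the origin is a critical point of a^f: (a^f)_x(0,0,0) = (a^f)_y(0,0,0) = (a^f)_p(0,0,0) = 0. -/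

import Mathlib

noncomputable section

/-- Partial derivative in the first variable of a function on `ℝ × ℝ`. -/
def pdx (f : ℝ × ℝ → ℝ) (q : ℝ × ℝ) : ℝ := deriv (fun t => f (t, q.2)) q.1

/-- Partial derivative in the second variable of a function on `ℝ × ℝ`. -/
def pdy (f : ℝ × ℝ → ℝ) (q : ℝ × ℝ) : ℝ := deriv (fun t => f (q.1, t)) q.2

/-- Partial derivative in `x` of a function on `ℝ × ℝ × ℝ` (coordinates `(x, y, p)`). -/
def pDx (F : ℝ × ℝ × ℝ → ℝ) (q : ℝ × ℝ × ℝ) : ℝ := deriv (fun t => F (t, q.2.1, q.2.2)) q.1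

/-- Partial derivative in `y` of a function on `ℝ × ℝ × ℝ` (coordinates `(x, y, p)`). -/
def pDy (F : ℝ × ℝ × ℝ → ℝ) (q : ℝ × ℝ × ℝ) : ℝ := deriv (fun t => F (q.1, t, q.2.2)) q.2.1

/-- Partial derivative in `p` of a function on `ℝ × ℝ × ℝ` (coordinates `(x, y, p)`). -/
def pDp (F : ℝ × ℝ × ℝ → ℝ) (q : ℝ × ℝ × ℝ) : ℝ := deriv (fun t => F (q.1, q.2.1, t)) q.2.2

/-- The asymptotic IDE function `a^f(x,y,p) = f_xx + 2 f_xy p + f_yy p²`. -/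
def aIDE (f : ℝ × ℝ → ℝ) (q : ℝ × ℝ × ℝ) : ℝ :=
  pdx (pdx f) (q.1, q.2.1) + 2 * pdy (pdx f) (q.1, q.2.1) * q.2.2
    + pdy (pdy f) (q.1, q.2.1) * q.2.2 ^ 2

/-- The inflection function `I^F(x,y,p) = F_x + p·F_y`; its zero set is the flec-surface. -/
def inflFun (F : ℝ × ℝ × ℝ → ℝ) (q : ℝ × ℝ × ℝ) : ℝ := pDx F q + q.2.2 * pDy F q

/-! At `p = 0` the inflection function of `a^f` is `a^f_x`, and its `p`-derivative is
`2 f_xyx + f_xxy = 3 f_xxy` by symmetry of mixed partials, while `a^f_y = f_xxy` there.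
So `I = ∂I/∂p = 0` at the origin forces `a^f_x = a^f_y = 0`. -/

section PlanePartials

variable {g : ℝ × ℝ → ℝ} {q : ℝ × ℝ}

theorem hasDerivAt_pdx (hg : DifferentiableAt ℝ g q) :
    HasDerivAt (fun t => g (t, q.2)) (pdx g q) q.1 :=
  (hg.comp q.1 (differentiableAt_id.prodMk (differentiableAt_const _))).hasDerivAt

theorem hasDerivAt_pdy (hg : DifferentiableAt ℝ g q) :
    HasDerivAt (fun t => g (q.1, t)) (pdy g q) q.2 :=
  (hg.comp q.2 ((differentiableAt_const _).prodMk differentiableAt_id)).hasDerivAt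

theorem pdx_eq_fderiv (hg : DifferentiableAt ℝ g q) : pdx g q = fderiv ℝ g q (1, 0) :=
  (hg.hasFDerivAt.comp_hasDerivAt q.1 ((hasDerivAt_id _).prodMk (hasDerivAt_const _ _))).deriv

theorem pdy_eq_fderiv (hg : DifferentiableAt ℝ g q) : pdy g q = fderiv ℝ g q (0, 1) :=
  (hg.hasFDerivAt.comp_hasDerivAt q.2 ((hasDerivAt_const _ _).prodMk (hasDerivAt_id _))).deriv

variable {m n : WithTop ℕ∞}

theorem contDiff_pdx (hg : ContDiff ℝ n g) (hmn : m + 1 ≤ n) : ContDiff ℝ m (pdx g) := by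
  rw [show pdx g = fun q => fderiv ℝ g q (1, 0) from
    funext fun q => pdx_eq_fderiv (hg.differentiable (fun h => by simp [h] at hmn) q)]
  exact (hg.fderiv_right hmn).clm_apply contDiff_const

theorem contDiff_pdy (hg : ContDiff ℝ n g) (hmn : m + 1 ≤ n) : ContDiff ℝ m (pdy g) := by
  rw [show pdy g = fun q => fderiv ℝ g q (0, 1) from
    funext fun q => pdy_eq_fderiv (hg.differentiable (fun h => by simp [h] at hmn) q)]
  exact (hg.fderiv_right hmn).clm_apply contDiff_const

theorem pdx_pdy_comm (hg : ContDiff ℝ 2 g) (q : ℝ × ℝ) : pdx (pdy g) q = pdy (pdx g) q := by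
  have hg' : Differentiable ℝ g := hg.differentiable two_ne_zero
  have hg'' : Differentiable ℝ (fderiv ℝ g) :=
    (hg.fderiv_right (m := 1) (by norm_num)).differentiable one_ne_zero
  have fderiv_apply (v w : ℝ × ℝ) :
      fderiv ℝ (fun z => fderiv ℝ g z v) q w = fderiv ℝ (fderiv ℝ g) q w v := by
    rw [fderiv_clm_apply (hg'' q) (differentiableAt_const v)]
    simp
  rw [pdx_eq_fderiv ((contDiff_pdy hg (by norm_num)).differentiable one_ne_zero q),
    pdy_eq_fderiv ((contDiff_pdx hg (by norm_num)).differentiable one_ne_zero q),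
    show pdy g = _ from funext fun z => pdy_eq_fderiv (hg' z),
    show pdx g = _ from funext fun z => pdx_eq_fderiv (hg' z), fderiv_apply, fderiv_apply]
  exact hg.contDiffAt.isSymmSndFDerivAt (by simp) _ _

end PlanePartials

theorem deriv_quadratic_add_mul_quadratic_zero (a₀ a₁ a₂ b₀ b₁ b₂ : ℝ) :
    deriv (fun p : ℝ => a₀ + 2 * a₁ * p + a₂ * p ^ 2 + p * (b₀ + 2 * b₁ * p + b₂ * p ^ 2))
      0 = 2 * a₁ + b₀ := by
  have hb : HasDerivAt (fun p : ℝ => b₀ + 2 * b₁ * p + b₂ * p ^ 2)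
      (2 * b₁ * 1 + b₂ * (2 * 0 ^ 1)) 0 :=
    (((hasDerivAt_id' 0).const_mul _).const_add _).add ((hasDerivAt_pow 2 0).const_mul _)
  have h := ((((hasDerivAt_id' 0).const_mul (2 * a₁)).const_add a₀).add
    ((hasDerivAt_pow 2 0).const_mul a₂)).add ((hasDerivAt_id' 0).mul hb)
  exact h.deriv.trans (by simp)

section AsymptoticIDE

variable {f : ℝ × ℝ → ℝ}

theorem differentiable_secondPartials (hf : ContDiff ℝ 3 f) :
    Differentiable ℝ (pdx (pdx f)) ∧ Differentiable ℝ (pdy (pdx f)) ∧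
      Differentiable ℝ (pdy (pdy f)) := by
  have hfx : ContDiff ℝ 2 (pdx f) := contDiff_pdx hf (by norm_num)
  have hfy : ContDiff ℝ 2 (pdy f) := contDiff_pdy hf (by norm_num)
  exact ⟨(contDiff_pdx hfx le_rfl).differentiable one_ne_zero,
    (contDiff_pdy hfx le_rfl).differentiable one_ne_zero,
    (contDiff_pdy hfy le_rfl).differentiable one_ne_zero⟩

theorem pDx_aIDE (hf : ContDiff ℝ 3 f) (q : ℝ × ℝ × ℝ) :
    pDx (aIDE f) q = pdx (pdx (pdx f)) (q.1, q.2.1) + 2 * pdx (pdy (pdx f)) (q.1, q.2.1) * q.2.2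
      + pdx (pdy (pdy f)) (q.1, q.2.1) * q.2.2 ^ 2 := by
  obtain ⟨hA, hB, hC⟩ := differentiable_secondPartials hf
  exact (((hasDerivAt_pdx (hA (q.1, q.2.1))).add
    (((hasDerivAt_pdx (hB (q.1, q.2.1))).const_mul 2).mul_const q.2.2)).add
    ((hasDerivAt_pdx (hC (q.1, q.2.1))).mul_const (q.2.2 ^ 2))).deriv

theorem pDy_aIDE (hf : ContDiff ℝ 3 f) (q : ℝ × ℝ × ℝ) :
    pDy (aIDE f) q = pdy (pdx (pdx f)) (q.1, q.2.1) + 2 * pdy (pdy (pdx f)) (q.1, q.2.1) * q.2.2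
      + pdy (pdy (pdy f)) (q.1, q.2.1) * q.2.2 ^ 2 := by
  obtain ⟨hA, hB, hC⟩ := differentiable_secondPartials hf
  exact (((hasDerivAt_pdy (hA (q.1, q.2.1))).add
    (((hasDerivAt_pdy (hB (q.1, q.2.1))).const_mul 2).mul_const q.2.2)).add
    ((hasDerivAt_pdy (hC (q.1, q.2.1))).mul_const (q.2.2 ^ 2))).deriv

theorem pDp_inflFun_aIDE_zero (hf : ContDiff ℝ 3 f) (x y : ℝ) :
    pDp (inflFun (aIDE f)) (x, y, 0) = 3 * pdy (pdx (pdx f)) (x, y) := by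
  have hI : (fun p => inflFun (aIDE f) (x, y, p)) = fun p =>
      pdx (pdx (pdx f)) (x, y) + 2 * pdx (pdy (pdx f)) (x, y) * p + pdx (pdy (pdy f)) (x, y) * p ^ 2
      + p * (pdy (pdx (pdx f)) (x, y) + 2 * pdy (pdy (pdx f)) (x, y) * p
        + pdy (pdy (pdy f)) (x, y) * p ^ 2) :=
    funext fun p => by rw [inflFun, pDx_aIDE hf, pDy_aIDE hf]
  change deriv (fun p => inflFun (aIDE f) (x, y, p)) 0 = _
  rw [hI, deriv_quadratic_add_mul_quadratic_zero,
    pdx_pdy_comm (contDiff_pdx hf (by norm_num)) (x, y)]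
  ring

end AsymptoticIDE

theorem lemmaG_general (f : ℝ × ℝ → ℝ) (hf : ContDiff ℝ (⊤ : ℕ∞) f)
    (hp : pDp (aIDE f) (0, 0, 0) = 0)
    (hI : inflFun (aIDE f) (0, 0, 0) = 0)
    (hIp : pDp (inflFun (aIDE f)) (0, 0, 0) = 0) :
    pDx (aIDE f) (0, 0, 0) = 0 ∧ pDy (aIDE f) (0, 0, 0) = 0 ∧
      pDp (aIDE f) (0, 0, 0) = 0 := by
  have hf3 : ContDiff ℝ 3 f := hf.of_le (by norm_cast)
  have hfxxy : pdy (pdx (pdx f)) (0, 0) = 0 := by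
    linarith [pDp_inflFun_aIDE_zero hf3 0 0]
  refine ⟨by simpa [inflFun] using hI, ?_, hp⟩
  simp [pDy_aIDE hf3, hfxxy]

/-- Lemma G: if the origin lies on the criminant of the asymptotic IDE and
the flec-surface of `a^f` has vertical tangent plane there, then the origin is a critical
point of `a^f`. -/
theorem lemmaG (f : ℝ × ℝ → ℝ) (hf : ContDiff ℝ (⊤ : ℕ∞) f)
    (h0 : aIDE f (0, 0, 0) = 0)
    (hp : pDp (aIDE f) (0, 0, 0) = 0)
    (hI : inflFun (aIDE f) (0, 0, 0) = 0)
    (hIp : pDp (inflFun (aIDE f)) (0, 0, 0) = 0) :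
    pDx (aIDE f) (0, 0, 0) = 0 ∧ pDy (aIDE f) (0, 0, 0) = 0 ∧
      pDp (aIDE f) (0, 0, 0) = 0 :=
  lemmaG_general f hf hp hI hIp
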